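/- arXiv:1109.3280 — 2 statements merged into one kernel-verified Lean document; each statement's English description precedes it below -/
import Mathlib

section
/- Let s : ℝ^n → ℝ^d be a Lipschitz map and let Z = {(x, s(x)) : x ∈ ℝ^n} ⊆ ℝ^n × ℝ^d be its graph. Assume that for every x ∈ ℝ^n there is an n-dimensional linear subspace D_x of ℝ^n × ℝ^d containing the tangent cone TC_{(x,s(x))} Z. Then s is differentiable at every x, D_x = {(v, Ds_x(v)) : v ∈ ℝ^n} is the graph of the derivative Ds_x, and if moreover the map x ↦ D_x is continuous (equivalently, writing D_x as the graph of a linear map L_x : ℝ^n → ℝ^d, the map x ↦ L_x is continuous), then s is continuously differentiable (of class C^1). -/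
open Filter Set

/-- Tangent cone of a set `Z ⊆ E` at a point `z`: the set consisting of `0` together with
all vectors `v = α • lim (zₙ − z)/‖zₙ − z‖` for some `α ∈ ℝ` and some sequence
`zₙ ∈ Z \ {z}` converging to `z`. -/
def paperTangentCone {E : Type*} [NormedAddCommGroup E] [NormedSpace ℝ E]
    (Z : Set E) (z : E) : Set E :=
  {0} ∪ {v | ∃ (α : ℝ) (w : E) (c : ℕ → E),
    (∀ k, c k ∈ Z \ {z}) ∧ Tendsto c atTop (nhds z) ∧
    Tendsto (fun k => ‖c k - z‖⁻¹ • (c k - z)) atTop (nhds w) ∧ v = α • w}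

open Topology

/-!
At a point `z = (x, s x)` of the graph of a `K`-Lipschitz map, every difference `p - z` of graph
points lies in the closed cone `‖u‖ ≤ max 1 K * ‖u.1‖`, so by compactness of the unit sphere
every sequence of graph points tending to `z` yields a unit tangent vector `w` with `w.1 ≠ 0`.
Approaching `x` along a ray `x + t v` shows that the first projection maps `D x` onto `ℝⁿ`;
since `dim D x = n` it is an isomorphism, so `D x` is the graph of a linear map `L`. If `L`
were not the derivative, a sequence `y → x` with `‖s y - s x - L (y - x)‖ ≥ ε ‖y - x‖` would
produce a tangent vector `w ∈ D x` with `‖w.2 - L w.1‖ ≥ ε ‖w.1‖ > 0`, a contradiction.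
-/

section TangentCone

variable {G : Type*} [NormedAddCommGroup G] [NormedSpace ℝ G]

theorem mem_paperTangentCone_of_tendsto {Z : Set G} {z w : G} {c : ℕ → G}
    (hcZ : ∀ k, c k ∈ Z \ {z}) (hc : Tendsto c atTop (𝓝 z))
    (hw : Tendsto (fun k => ‖c k - z‖⁻¹ • (c k - z)) atTop (𝓝 w)) :
    w ∈ paperTangentCone Z z :=
  Or.inr ⟨1, w, c, hcZ, hc, hw, (one_smul ℝ w).symm⟩

theorem exists_mem_paperTangentCone_of_tendsto [ProperSpace G] {Z S : Set G} {z : G}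
    (hS : IsClosed S) (hS_smul : ∀ r : ℝ, 0 ≤ r → ∀ u ∈ S, r • u ∈ S)
    {c : ℕ → G} (hcZ : ∀ k, c k ∈ Z \ {z}) (hc : Tendsto c atTop (𝓝 z))
    (hcS : ∀ k, c k - z ∈ S) :
    ∃ w ∈ paperTangentCone Z z, w ∈ S ∧ ‖w‖ = 1 := by
  have hunit k : ‖c k - z‖⁻¹ • (c k - z) ∈ Metric.sphere (0 : G) 1 ∩ S :=
    ⟨by simpa using norm_smul_inv_norm (𝕜 := ℝ) (sub_ne_zero.mpr (hcZ k).2),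
      hS_smul _ (by positivity) _ (hcS k)⟩
  obtain ⟨w, ⟨hw1, hwS⟩, φ, hφ, hw⟩ :=
    ((isCompact_sphere (0 : G) 1).inter_right hS).tendsto_subseq hunit
  exact ⟨w, mem_paperTangentCone_of_tendsto (fun k => hcZ (φ k)) (hc.comp hφ.tendsto_atTop) hw,
    hwS, by simpa using hw1⟩

end TangentCone

section LipschitzGraph

variable {E F : Type*} [NormedAddCommGroup E] [NormedAddCommGroup F]

theorem LipschitzWith.norm_prod_sub_le {s : E → F} {K : NNReal} (hK : LipschitzWith K s)
    (x y : E) : ‖(y - x, s y - s x)‖ ≤ (max 1 K : NNReal) * ‖y - x‖ := by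
  simpa [dist_eq_norm] using (LipschitzWith.id.prodMk hK).dist_le_mul y x

variable [NormedSpace ℝ E] [NormedSpace ℝ F]

theorem LipschitzWith.exists_mem_paperTangentCone_graph [ProperSpace E] [ProperSpace F]
    {s : E → F} {K : NNReal} (hK : LipschitzWith K s) {x : E} {T : Set (E × F)}
    (hT : IsClosed T) (hT_smul : ∀ r : ℝ, 0 ≤ r → ∀ u ∈ T, r • u ∈ T) {y : ℕ → E}
    (hy : Tendsto y atTop (𝓝 x)) (hyx : ∀ k, y k ≠ x)
    (hyT : ∀ k, (y k - x, s (y k) - s x) ∈ T) :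
    ∃ w ∈ paperTangentCone {p : E × F | p.2 = s p.1} (x, s x), w ∈ T ∧ w.1 ≠ 0 := by
  set M : ℝ := ((max 1 K : NNReal) : ℝ)
  obtain ⟨w, hwTC, ⟨hwM, hwT⟩, hw1⟩ := exists_mem_paperTangentCone_of_tendsto
    (Z := {p : E × F | p.2 = s p.1}) (S := {u : E × F | ‖u‖ ≤ M * ‖u.1‖} ∩ T)
    ((isClosed_le (by fun_prop) (by fun_prop)).inter hT)
    (fun r hr u ⟨huM, huT⟩ => ⟨by
      show ‖r • u‖ ≤ M * ‖r • u.1‖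
      rw [norm_smul, norm_smul, Real.norm_of_nonneg hr, mul_left_comm]
      exact mul_le_mul_of_nonneg_left huM hr, hT_smul r hr u huT⟩)
    (c := fun k => (y k, s (y k))) (fun k => ⟨rfl, fun h => hyx k (Prod.ext_iff.1 h).1⟩)
    (hy.prodMk_nhds (hK.continuous.continuousAt.tendsto.comp hy))
    (fun k => ⟨hK.norm_prod_sub_le x (y k), hyT k⟩)
  refine ⟨w, hwTC, hwT, fun h => ?_⟩
  replace hwM : ‖w‖ ≤ M * ‖w.1‖ := hwM
  rw [h, norm_zero, mul_zero, hw1] at hwM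
  exact zero_lt_one.not_ge hwM

theorem LipschitzWith.exists_mem_fst_eq_of_paperTangentCone_subset [ProperSpace E]
    [ProperSpace F] {s : E → F} {K : NNReal} (hK : LipschitzWith K s) {x : E}
    {D : Submodule ℝ (E × F)} (hTC : paperTangentCone {p : E × F | p.2 = s p.1} (x, s x) ⊆ D)
    (v : E) : ∃ p ∈ D, p.1 = v := by
  rcases eq_or_ne v 0 with rfl | hv
  · exact ⟨0, D.zero_mem, rfl⟩
  set t : ℕ → ℝ := fun k => 1 / ((k : ℝ) + 1)
  have ht : Tendsto t atTop (𝓝 0) := tendsto_one_div_add_atTop_nhds_zero_nat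
  obtain ⟨w, hwTC, hwv, hw1⟩ := hK.exists_mem_paperTangentCone_graph
    (T := {u | u.1 ∈ ℝ ∙ v}) ((Submodule.closed_of_finiteDimensional _).preimage continuous_fst)
    (fun r _ u (hu : u.1 ∈ ℝ ∙ v) => show r • u.1 ∈ ℝ ∙ v from Submodule.smul_mem _ r hu)
    (y := fun k => x + t k • v)
    (by simpa using tendsto_const_nhds.add (ht.smul_const v))
    (fun k => by simp [t, hv]; positivity)
    (fun k => by simpa using Submodule.smul_mem _ (t k) (Submodule.mem_span_singleton_self v))
  obtain ⟨a, ha⟩ := Submodule.mem_span_singleton.1 hwv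
  have ha0 : a ≠ 0 := by rintro rfl; exact hw1 (by simp [← ha])
  exact ⟨a⁻¹ • w, D.smul_mem _ (hTC hwTC), by simp [← ha, smul_smul, ha0]⟩

theorem LipschitzWith.hasFDerivAt_of_paperTangentCone_subset_graph [ProperSpace E]
    [ProperSpace F] {s : E → F} {K : NNReal} (hK : LipschitzWith K s) {x : E} {L : E →L[ℝ] F}
    (hTC : paperTangentCone {p : E × F | p.2 = s p.1} (x, s x) ⊆ (L : E →ₗ[ℝ] F).graph) :
    HasFDerivAt s L x := by
  rw [hasFDerivAt_iff_isLittleO]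
  by_contra h
  obtain ⟨ε, hε, hfreq⟩ : ∃ ε > 0, ∃ᶠ y in 𝓝 x, ε * ‖y - x‖ < ‖s y - s x - L (y - x)‖ := by
    simpa [Asymptotics.isLittleO_iff] using h
  obtain ⟨y, hy, hyε⟩ := frequently_iff_seq_forall.1 hfreq
  obtain ⟨w, hwTC, hwε, hw1⟩ := hK.exists_mem_paperTangentCone_graph
    (T := {u | ε * ‖u.1‖ ≤ ‖u.2 - L u.1‖}) (isClosed_le (by fun_prop) (by fun_prop))
    (fun r hr u (hu : ε * ‖u.1‖ ≤ ‖u.2 - L u.1‖) => by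
      show ε * ‖r • u.1‖ ≤ ‖r • u.2 - L (r • u.1)‖
      rw [map_smul, ← smul_sub, norm_smul, norm_smul, Real.norm_of_nonneg hr, mul_left_comm]
      exact mul_le_mul_of_nonneg_left hu hr) hy (fun k hk => by simpa [hk] using hyε k)
    (fun k => (hyε k).le)
  have hw : w.2 = L w.1 := hTC hwTC
  replace hwε : ε * ‖w.1‖ ≤ ‖w.2 - L w.1‖ := hwε
  rw [hw, sub_self, norm_zero] at hwε
  exact hw1 (norm_eq_zero.1 (le_antisymm (nonpos_of_mul_nonpos_right hwε hε) (norm_nonneg _)))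

end LipschitzGraph

theorem Submodule.exists_eq_graph_of_finrank_eq {K E F : Type*} [DivisionRing K]
    [AddCommGroup E] [Module K E] [AddCommGroup F] [Module K F] [FiniteDimensional K E]
    [FiniteDimensional K F] (D : Submodule K (E × F))
    (hdim : Module.finrank K D = Module.finrank K E)
    (hfst : ∀ v, ∃ p ∈ D, p.1 = v) : ∃ L : E →ₗ[K] F, D = L.graph := by
  let π : D →ₗ[K] E := (LinearMap.fst K E F).comp D.subtype
  have hπ : Function.Surjective π := fun v => by
    obtain ⟨p, hp, rfl⟩ := hfst v
    exact ⟨⟨p, hp⟩, rfl⟩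
  let e : D ≃ₗ[K] E := LinearEquiv.ofBijective π
    ⟨(LinearMap.injective_iff_surjective_of_finrank_eq_finrank hdim).2 hπ, hπ⟩
  refine ⟨(LinearMap.snd K E F).comp (D.subtype.comp e.symm.toLinearMap), ?_⟩
  ext p
  rw [LinearMap.mem_graph_iff]
  constructor
  · intro hp
    have : e.symm p.1 = ⟨p, hp⟩ := e.symm_apply_eq.2 rfl
    simp [this]
  · intro hp
    have : ((e.symm p.1 : D) : E × F) = p := Prod.ext (e.apply_symm_apply p.1) hp.symm
    exact this ▸ (e.symm p.1).2

/-- Let `s : ℝⁿ → ℝ^d` be Lipschitz, `Z` its graph. If for every `x` the tangent cone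
`TC_{(x, s x)} Z` is contained in an `n`-dimensional subspace `D x`, then `s` is
differentiable at every `x`, `D x` is the graph of the derivative of `s` at `x`, and if
moreover `x ↦ D x` is continuous (equivalently, the map `x ↦ L x` sending `x` to the
linear map whose graph is `D x` is continuous), then `s` is of class `C¹`. -/
theorem lipschitz_graph_differentiable_of_tangentCone
    {n d : ℕ} (s : EuclideanSpace ℝ (Fin n) → EuclideanSpace ℝ (Fin d))
    (hs : ∃ K : NNReal, LipschitzWith K s)
    (D : EuclideanSpace ℝ (Fin n) →
      Submodule ℝ (EuclideanSpace ℝ (Fin n) × EuclideanSpace ℝ (Fin d)))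
    (hdim : ∀ x, Module.finrank ℝ (D x) = n)
    (hTC : ∀ x, paperTangentCone
      {p : EuclideanSpace ℝ (Fin n) × EuclideanSpace ℝ (Fin d) | p.2 = s p.1}
      (x, s x) ⊆ D x) :
    (∀ x, DifferentiableAt ℝ s x) ∧
    (∀ x, (D x : Set (EuclideanSpace ℝ (Fin n) × EuclideanSpace ℝ (Fin d))) =
      {p | p.2 = fderiv ℝ s x p.1}) ∧
    ((Continuous fun x => fderiv ℝ s x) → ContDiff ℝ 1 s) := by
  obtain ⟨K, hK⟩ := hs
  choose L hL using fun x => (D x).exists_eq_graph_of_finrank_eq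
    (by rw [hdim, finrank_euclideanSpace_fin])
    (hK.exists_mem_fst_eq_of_paperTangentCone_subset (hTC x))
  have hderiv x : HasFDerivAt s (L x).toContinuousLinearMap x :=
    hK.hasFDerivAt_of_paperTangentCone_subset_graph (by simpa [← hL x] using hTC x)
  have hdiff x : DifferentiableAt ℝ s x := (hderiv x).differentiableAt
  refine ⟨hdiff, fun x => ?_, fun hcont => contDiff_one_iff_fderiv.2 ⟨hdiff, hcont⟩⟩
  rw [(hderiv x).fderiv, hL x]
  ext p
  exact LinearMap.mem_graph_iff _ p
end

section
/- Let f be a C^1 embedding of B into E satisfying conditions (1') and (2'). Then there exists ε > 0 such that every C^1 embedding g of B into E whose C^1-distance to f is less than ε also satisfies conditions (1') and (2'). In other words, conditions (1') and (2') are open in the C^1 topology. -/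
open Set

/-- The stable cone `Cˢ = {(vₛ, vᵤ) : ‖vₛ‖ ≤ ‖vᵤ‖}` in `E = ℝˢ × ℝᵘ`. -/
def coneS (s u : ℕ) : Set (EuclideanSpace ℝ (Fin s) × EuclideanSpace ℝ (Fin u)) :=
  {v | ‖v.1‖ ≤ ‖v.2‖}

/-- The unstable cone `Cᵘ = {(vₛ, vᵤ) : ‖vᵤ‖ ≤ ‖vₛ‖}` in `E = ℝˢ × ℝᵘ`. -/
def coneU (s u : ℕ) : Set (EuclideanSpace ℝ (Fin s) × EuclideanSpace ℝ (Fin u)) :=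
  {v | ‖v.2‖ ≤ ‖v.1‖}

/-- A `C¹` embedding of `B` into `E`: a `C¹` map defined on a neighbourhood of `B`,
injective on `B`, with invertible derivative at every point of `B`. -/
def IsC1EmbeddingOn {s u : ℕ}
    (B : Set (EuclideanSpace ℝ (Fin s) × EuclideanSpace ℝ (Fin u)))
    (g : EuclideanSpace ℝ (Fin s) × EuclideanSpace ℝ (Fin u) →
      EuclideanSpace ℝ (Fin s) × EuclideanSpace ℝ (Fin u)) : Prop :=
  (∃ U, IsOpen U ∧ B ⊆ U ∧ ContDiffOn ℝ 1 g U) ∧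
  Set.InjOn g B ∧ ∀ z ∈ B, Function.Bijective (fderiv ℝ g z)

/-- Conditions (1') and (2') of topological normal hyperbolicity, for `B = Bˢ × Bᵘ`,
`∂ˢB = (frontier Bˢ) × Bᵘ`, `∂ᵘB = Bˢ × (frontier Bᵘ)`:
(1') `g(B) ∩ ∂ˢB = ∅` and `B ∩ g(∂ᵘB) = ∅`;
(2') for every `z ∈ B`, `Dg_z(Cˢ) ⊆ int Cˢ ∪ {0}` and `Cᵘ ⊆ Dg_z(int Cᵘ) ∪ {0}`. -/
def SatisfiesConds {s u : ℕ}
    (Bs : Set (EuclideanSpace ℝ (Fin s))) (Bu : Set (EuclideanSpace ℝ (Fin u)))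
    (g : EuclideanSpace ℝ (Fin s) × EuclideanSpace ℝ (Fin u) →
      EuclideanSpace ℝ (Fin s) × EuclideanSpace ℝ (Fin u)) : Prop :=
  g '' (Bs ×ˢ Bu) ∩ (frontier Bs ×ˢ Bu) = ∅ ∧
  (Bs ×ˢ Bu) ∩ g '' (Bs ×ˢ frontier Bu) = ∅ ∧
  ∀ z ∈ Bs ×ˢ Bu,
    (fderiv ℝ g z) '' coneS s u ⊆ interior (coneS s u) ∪ {0} ∧
    coneU s u ⊆ (fderiv ℝ g z) '' interior (coneU s u) ∪ {0}

/-!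
Condition (1') says that the compact sets `f(B)` and `f(∂ᵘB)` miss the closed sets `∂ˢB` and
`B`; they are then at positive distance from them, which survives `C⁰`-small perturbations.
For (2'), injectivity of `Df_z` turns `Df_z(Cˢ) ⊆ int Cˢ ∪ {0}` into the strict inequality
`‖(Df_z v)ₛ‖ < ‖(Df_z v)ᵤ‖` for nonzero `v ∈ Cˢ`. By compactness of `B` and of the unit vectors
of `Cˢ` the gap between the two sides is at least `c‖v‖`, so it survives perturbations of `Df_z`
of norm `< c/2`. The second half of (2') follows from the first for every map with surjective
derivative.
-/

open Metric Filter Topology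

section Perturbation

variable {α X : Type*} [PseudoMetricSpace X]

lemma exists_pos_image_inter_eq_empty_of_dist_lt {f : α → X} {S : Set α} {C : Set X}
    (hfS : IsCompact (f '' S)) (hC : IsClosed C) (h : f '' S ∩ C = ∅) :
    ∃ δ > 0, ∀ g : α → X, (∀ z ∈ S, dist (g z) (f z) < δ) → g '' S ∩ C = ∅ := by
  obtain ⟨δ, hδ, hsub⟩ := hfS.exists_thickening_subset_open hC.isOpen_compl
    (subset_compl_iff_disjoint_right.2 (disjoint_iff_inter_eq_empty.2 h))
  refine ⟨δ, hδ, fun g hg => disjoint_iff_inter_eq_empty.1 ?_⟩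
  rw [← subset_compl_iff_disjoint_right]
  rintro _ ⟨z, hz, rfl⟩
  exact hsub (mem_thickening_iff.2 ⟨f z, mem_image_of_mem f hz, hg z hz⟩)

end Perturbation

section Cones

variable {s u : ℕ}

local notation "𝔼" => EuclideanSpace ℝ (Fin s) × EuclideanSpace ℝ (Fin u)

lemma setOf_norm_fst_lt_subset_interior_coneS :
    {v : 𝔼 | ‖v.1‖ < ‖v.2‖} ⊆ interior (coneS s u) :=
  interior_maximal (fun _ => le_of_lt (α := ℝ))
    (isOpen_lt continuous_fst.norm continuous_snd.norm)

lemma setOf_norm_snd_lt_subset_interior_coneU :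
    {v : 𝔼 | ‖v.2‖ < ‖v.1‖} ⊆ interior (coneU s u) :=
  interior_maximal (fun _ => le_of_lt (α := ℝ))
    (isOpen_lt continuous_snd.norm continuous_fst.norm)

/-- On the boundary `‖w.1‖ = ‖w.2‖ ≠ 0` of the cone, stretching `w.1` leaves the cone. -/
lemma norm_fst_lt_norm_snd_of_mem_interior_coneS {w : 𝔼} (hw : w ∈ interior (coneS s u))
    (hw0 : w ≠ 0) : ‖w.1‖ < ‖w.2‖ := by
  have hle : ‖w.1‖ ≤ ‖w.2‖ := interior_subset (s := coneS s u) hw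
  refine hle.lt_of_ne fun heq => ?_
  have hw1 : w.1 ≠ 0 := fun h1 =>
    hw0 (Prod.ext h1 (norm_eq_zero.1 (by rw [← heq, h1, norm_zero])))
  have hstretch : Tendsto (fun t : ℝ => ((1 + t) • w.1, w.2)) (𝓝[>] 0) (𝓝 w) := by
    have : Continuous fun t : ℝ => ((1 + t) • w.1, w.2) := by fun_prop
    simpa using (this.tendsto 0).mono_left nhdsWithin_le_nhds
  obtain ⟨t, ht, ht0⟩ := ((hstretch.eventually (mem_interior_iff_mem_nhds.1 hw)).and
    self_mem_nhdsWithin).exists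
  have hlt : ‖w.2‖ < ‖(1 + t) • w.1‖ := by
    rw [norm_smul, Real.norm_of_nonneg (by linarith : (0 : ℝ) ≤ 1 + t), ← heq]
    nlinarith [norm_pos_iff.2 hw1]
  exact (not_le.2 hlt) ht

noncomputable def coneGap (A : 𝔼 →L[ℝ] 𝔼) (v : 𝔼) : ℝ := ‖(A v).2‖ - ‖(A v).1‖

lemma continuous_coneGap : Continuous fun p : (𝔼 →L[ℝ] 𝔼) × 𝔼 => coneGap p.1 p.2 := by
  have happ : Continuous fun p : (𝔼 →L[ℝ] 𝔼) × 𝔼 => p.1 p.2 :=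
    continuous_fst.clm_apply continuous_snd
  exact (continuous_snd.comp happ).norm.sub (continuous_fst.comp happ).norm

lemma coneGap_smul (A : 𝔼 →L[ℝ] 𝔼) (t : ℝ) (v : 𝔼) :
    coneGap A (t • v) = |t| * coneGap A v := by
  simp only [coneGap, map_smul, Prod.smul_fst, Prod.smul_snd, norm_smul, Real.norm_eq_abs]
  ring

lemma coneGap_sub_le (A D : 𝔼 →L[ℝ] 𝔼) (v : 𝔼) :
    coneGap A v - 2 * (‖A - D‖ * ‖v‖) ≤ coneGap D v := by
  have hdiff : ‖A v - D v‖ ≤ ‖A - D‖ * ‖v‖ := by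
    simpa using (A - D).le_opNorm v
  have h1 := norm_sub_norm_le (D v).1 (A v).1
  have h2 := norm_sub_norm_le (A v).2 (D v).2
  have h1' : ‖(D v).1 - (A v).1‖ ≤ ‖A v - D v‖ := by
    rw [norm_sub_rev]; exact norm_fst_le (A v - D v)
  have h2' : ‖(A v).2 - (D v).2‖ ≤ ‖A v - D v‖ := norm_snd_le (A v - D v)
  unfold coneGap
  linarith

lemma exists_pos_mul_norm_le_coneGap {K : Set (𝔼 →L[ℝ] 𝔼)} (hK : IsCompact K)
    (hpos : ∀ A ∈ K, ∀ v ∈ coneS s u, v ≠ 0 → 0 < coneGap A v) :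
    ∃ c > 0, ∀ A ∈ K, ∀ v ∈ coneS s u, c * ‖v‖ ≤ coneGap A v := by
  have hcone : IsClosed (coneS s u) := isClosed_le continuous_fst.norm continuous_snd.norm
  have hunits : IsCompact (coneS s u ∩ sphere 0 1) := (isCompact_sphere 0 1).inter_left hcone
  obtain ⟨c, hc, hmin⟩ := (hK.prod hunits).exists_forall_le' continuous_coneGap.continuousOn
    fun p hp =>
      hpos p.1 hp.1 p.2 hp.2.1 (ne_zero_of_mem_unit_sphere ⟨p.2, hp.2.2⟩)
  refine ⟨c, hc, fun A hA v hv => ?_⟩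
  rcases eq_or_ne v 0 with rfl | hv0
  · simp [coneGap]
  have hunit : ‖v‖⁻¹ • v ∈ coneS s u ∩ sphere 0 1 := by
    refine ⟨?_, by simp [norm_smul, hv0]⟩
    show ‖(‖v‖⁻¹ • v).1‖ ≤ ‖(‖v‖⁻¹ • v).2‖
    simp only [Prod.smul_fst, Prod.smul_snd, norm_smul]
    exact mul_le_mul_of_nonneg_left hv (norm_nonneg _)
  have := hmin (A, ‖v‖⁻¹ • v) ⟨hA, hunit⟩
  rw [coneGap_smul, abs_inv, abs_norm] at this
  rwa [le_inv_mul_iff₀ (norm_pos_iff.2 hv0), mul_comm] at this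

lemma pos_coneGap_of_image_coneS_subset {L : 𝔼 →L[ℝ] 𝔼} (hL : Function.Injective L)
    (h : L '' coneS s u ⊆ interior (coneS s u) ∪ {0}) {v : 𝔼} (hv : v ∈ coneS s u)
    (hv0 : v ≠ 0) : 0 < coneGap L v := by
  have hLv0 : L v ≠ 0 := (map_ne_zero_iff L hL).2 hv0
  rcases h (mem_image_of_mem L hv) with hint | hzero
  · exact sub_pos.2 (norm_fst_lt_norm_snd_of_mem_interior_coneS hint hLv0)
  · exact absurd hzero hLv0

lemma image_coneS_subset_of_norm_sub_lt {A D : 𝔼 →L[ℝ] 𝔼} {c : ℝ}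
    (hA : ∀ v ∈ coneS s u, c * ‖v‖ ≤ coneGap A v) (hAD : ‖A - D‖ < c / 2) :
    D '' coneS s u ⊆ interior (coneS s u) ∪ {0} := by
  rintro _ ⟨v, hv, rfl⟩
  rcases eq_or_ne v 0 with rfl | hv0
  · simp
  left
  apply setOf_norm_fst_lt_subset_interior_coneS
  have hgap : 0 < coneGap D v := by
    have := coneGap_sub_le A D v
    nlinarith [hA v hv, norm_pos_iff.2 hv0]
  exact sub_pos.1 hgap

/-- A preimage outside `int Cᵘ` lies in `Cˢ`, so its image lies strictly inside `Cˢ`,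
hence outside `Cᵘ`. -/
lemma coneU_subset_image_interior_coneU {L : 𝔼 →L[ℝ] 𝔼} (hL : Function.Surjective L)
    (h : L '' coneS s u ⊆ interior (coneS s u) ∪ {0}) :
    coneU s u ⊆ L '' interior (coneU s u) ∪ {0} := by
  intro w hw
  rcases eq_or_ne w 0 with rfl | hw0
  · exact Or.inr rfl
  obtain ⟨v, rfl⟩ := hL w
  by_cases hv : ‖v.2‖ < ‖v.1‖
  · exact Or.inl ⟨v, setOf_norm_snd_lt_subset_interior_coneU hv, rfl⟩
  rcases h (mem_image_of_mem L (not_lt.1 hv)) with hint | hzero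
  · exact absurd hw (not_le.2 (norm_fst_lt_norm_snd_of_mem_interior_coneS hint hw0))
  · exact absurd hzero hw0

end Cones

theorem conditions_open_in_C1_general {s u : ℕ}
    (Bs : Set (EuclideanSpace ℝ (Fin s))) (Bu : Set (EuclideanSpace ℝ (Fin u)))
    (hBsc : IsCompact Bs)
    (hBuc : IsCompact Bu)
    (f : EuclideanSpace ℝ (Fin s) × EuclideanSpace ℝ (Fin u) →
      EuclideanSpace ℝ (Fin s) × EuclideanSpace ℝ (Fin u))
    (hf : IsC1EmbeddingOn (Bs ×ˢ Bu) f) (hfc : SatisfiesConds Bs Bu f) :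
    ∃ ε > (0 : ℝ),
      ∀ g, IsC1EmbeddingOn (Bs ×ˢ Bu) g →
        (∀ z ∈ Bs ×ˢ Bu, ‖f z - g z‖ + ‖fderiv ℝ f z - fderiv ℝ g z‖ < ε) →
        SatisfiesConds Bs Bu g := by
  obtain ⟨⟨U, hUo, hBU, hfC1⟩, -, hfD⟩ := hf
  obtain ⟨hfS, hfU, hfcone⟩ := hfc
  have hB : IsCompact (Bs ×ˢ Bu) := hBsc.prod hBuc
  have hfB : ContinuousOn f (Bs ×ˢ Bu) := hfC1.continuousOn.mono hBU
  have hBu' : Bs ×ˢ frontier Bu ⊆ Bs ×ˢ Bu := prod_mono subset_rfl hBuc.isClosed.frontier_subset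
  obtain ⟨δs, hδs, hS⟩ := exists_pos_image_inter_eq_empty_of_dist_lt
    (hB.image_of_continuousOn hfB) (isClosed_frontier.prod hBuc.isClosed) hfS
  obtain ⟨δu, hδu, hU⟩ := exists_pos_image_inter_eq_empty_of_dist_lt
    ((hB.of_isClosed_subset (hBsc.isClosed.prod isClosed_frontier) hBu').image_of_continuousOn
      (hfB.mono hBu')) hB.isClosed (by rwa [inter_comm] at hfU)
  obtain ⟨c, hc, hgap⟩ := exists_pos_mul_norm_le_coneGap
    (hB.image_of_continuousOn ((hfC1.continuousOn_fderiv_of_isOpen hUo le_rfl).mono hBU))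
    (forall_mem_image.2 fun z hz _ =>
      pos_coneGap_of_image_coneS_subset (hfD z hz).injective (hfcone z hz).1)
  refine ⟨min (min δs δu) (c / 2), by positivity, fun g hg hfg => ?_⟩
  have hclose : ∀ z ∈ Bs ×ˢ Bu,
      dist (g z) (f z) < min δs δu ∧ ‖fderiv ℝ f z - fderiv ℝ g z‖ < c / 2 := fun z hz => by
    have := hfg z hz
    rw [dist_eq_norm, norm_sub_rev]
    constructor <;> linarith [norm_nonneg (f z - g z), norm_nonneg (fderiv ℝ f z - fderiv ℝ g z),
      min_le_left (min δs δu) (c / 2), min_le_right (min δs δu) (c / 2)]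
  have hgcone : ∀ z ∈ Bs ×ˢ Bu,
      fderiv ℝ g z '' coneS s u ⊆ interior (coneS s u) ∪ {0} := fun z hz =>
    image_coneS_subset_of_norm_sub_lt (hgap _ (mem_image_of_mem _ hz)) (hclose z hz).2
  refine ⟨hS g fun z hz => (hclose z hz).1.trans_le (min_le_left _ _), ?_, fun z hz =>
    ⟨hgcone z hz, coneU_subset_image_interior_coneU (hg.2.2 z hz).surjective (hgcone z hz)⟩⟩
  rw [inter_comm]
  exact hU g fun z hz => (hclose z (hBu' hz)).1.trans_le (min_le_right _ _)

/-- Conditions (1') and (2') are open in the `C¹` topology: if a `C¹` embedding `f` of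
`B = Bˢ × Bᵘ` satisfies them, then there is `ε > 0` such that every `C¹` embedding `g`
at `C¹`-distance less than `ε` from `f` on `B` also satisfies them. -/
theorem conditions_open_in_C1 {s u : ℕ}
    (Bs : Set (EuclideanSpace ℝ (Fin s))) (Bu : Set (EuclideanSpace ℝ (Fin u)))
    (hBsc : IsCompact Bs) (hBsconv : Convex ℝ Bs) (hBs0 : Bs ∈ nhds 0)
    (hBuc : IsCompact Bu) (hBuconv : Convex ℝ Bu) (hBu0 : Bu ∈ nhds 0)
    (f : EuclideanSpace ℝ (Fin s) × EuclideanSpace ℝ (Fin u) →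
      EuclideanSpace ℝ (Fin s) × EuclideanSpace ℝ (Fin u))
    (hf : IsC1EmbeddingOn (Bs ×ˢ Bu) f) (hfc : SatisfiesConds Bs Bu f) :
    ∃ ε > (0 : ℝ),
      ∀ g, IsC1EmbeddingOn (Bs ×ˢ Bu) g →
        (∀ z ∈ Bs ×ˢ Bu, ‖f z - g z‖ + ‖fderiv ℝ f z - fderiv ℝ g z‖ < ε) →
        SatisfiesConds Bs Bu g :=
  conditions_open_in_C1_general Bs Bu hBsc hBuc f hf hfc
end
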